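/- arXiv:1807.09417 — 4 statements merged into one kernel-verified Lean document; each statement's English description precedes it below -/
import Mathlib

section
/- For every n divisible by 3, there exists a graph on n vertices with exactly 3^{n/3} maximal cliques. -/
/-! Pulling the complete graph on `m` blocks back along a map `p` that sends each of the `3 * m`
vertices to its block gives the complete multipartite graph with parts of size three. Its cliques
are the sets on which `p` is injective, so its maximal cliques are the transversals of `p`. These
are the images of the sections of `p`, whose number is the product of the sizes of the parts. -/

open Set

namespace SimpleGraph

variable {α ι : Type*}

theorem isClique_comap_top_iff {p : α → ι} {s : Set α} :
    ((⊤ : SimpleGraph ι).comap p).IsClique s ↔ s.InjOn p := by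
  rw [isClique_iff, injOn_iff_pairwise_ne]
  rfl

theorem maximal_isClique_comap_top_iff {p : α → ι} (hp : p.Surjective) {s : Set α} :
    Maximal ((⊤ : SimpleGraph ι).comap p).IsClique s ↔ BijOn p s univ := by
  have isClique_eq : ((⊤ : SimpleGraph ι).comap p).IsClique = fun t => t.InjOn p :=
    funext fun _ => propext isClique_comap_top_iff
  rw [isClique_eq]
  refine ⟨fun h => ⟨mapsTo_univ _ _, h.prop, fun i _ => ?_⟩, fun h => ⟨h.injOn, ?_⟩⟩
  · by_contra hi
    obtain ⟨a, rfl⟩ := hp i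
    have ha : a ∉ s := fun ha => hi ⟨a, ha, rfl⟩
    exact ha (h.mem_of_prop_insert ((injOn_insert ha).2 ⟨h.prop, hi⟩))
  · intro t ht hst x hx
    obtain ⟨y, hy, hxy⟩ := h.surjOn (mem_univ (p x))
    exact ht (hst hy) hx hxy ▸ hy

theorem maximal_isClique_coe_finset_iff [Fintype α] {G : SimpleGraph α} {s : Finset α} :
    Maximal (fun t : Finset α => G.IsClique t) s ↔ Maximal G.IsClique (s : Set α) :=
  (Fintype.finsetOrderIsoSet.toOrderEmbedding.maximal_apply_mem_iff (t := {t | G.IsClique t})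
    fun t _ => Fintype.finsetOrderIsoSet.surjective t).symm

end SimpleGraph

theorem Set.ncard_setOf_bijOn_univ {α ι : Type*} [DecidableEq α] [Fintype ι] (p : α → ι) :
    {s : Finset α | BijOn p s univ}.ncard = ∏ i, Nat.card {a // p a = i} := by
  let F : ((i : ι) → {a // p a = i}) → Finset α := fun σ => Finset.univ.image fun i => (σ i : α)
  have mem_F {σ a} : a ∈ F σ ↔ ∃ i, (σ i : α) = a := by simp [F]
  have F_injective : F.Injective := by
    intro σ τ h
    funext i
    obtain ⟨j, hj⟩ := mem_F.1 (h ▸ mem_F.2 ⟨i, rfl⟩ : (σ i : α) ∈ F τ)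
    obtain rfl : j = i := (τ j).2.symm.trans (hj ▸ (σ i).2)
    exact Subtype.ext hj.symm
  have range_F : range F = {s : Finset α | BijOn p s univ} := by
    ext s
    constructor
    · rintro ⟨σ, rfl⟩
      refine ⟨mapsTo_univ _ _, ?_, fun i _ => ⟨σ i, mem_F.2 ⟨i, rfl⟩, (σ i).2⟩⟩
      rintro _ ha _ hb hab
      obtain ⟨i, rfl⟩ := mem_F.1 ha
      obtain ⟨j, rfl⟩ := mem_F.1 hb
      obtain rfl : i = j := (σ i).2.symm.trans (hab.trans (σ j).2)
      rfl
    · intro h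
      choose a ha hpa using fun i => h.surjOn (mem_univ i)
      refine ⟨fun i => ⟨a i, hpa i⟩, Finset.ext fun x => mem_F.trans ⟨?_, fun hx => ?_⟩⟩
      · rintro ⟨i, rfl⟩
        exact ha i
      · exact ⟨p x, h.injOn (ha _) hx (hpa _)⟩
  rw [← range_F, ncard_range_of_injective F_injective, Nat.card_pi]

theorem Equiv.natCard_fiber_fst {α ι κ : Type*} (e : α ≃ ι × κ) (i : ι) :
    Nat.card {a // (e a).1 = i} = Nat.card κ := by
  rw [Nat.card_congr ((e.subtypeEquiv fun _ => Iff.rfl).trans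
    (Equiv.prodSubtypeFstEquivSubtypeProd (p := (· = i))))]
  simp

/-- for every `n` divisible by 3, there is a graph on `n` vertices with
exactly `3^{n/3}` maximal cliques. -/
theorem moon_moser_tight (n : ℕ) (hn : 3 ∣ n) :
    ∃ (G : SimpleGraph (Fin n)),
      ({s : Finset (Fin n) | G.IsClique (s : Set (Fin n)) ∧
        ∀ t : Finset (Fin n), G.IsClique (t : Set (Fin n)) → s ⊆ t → s = t}).ncard
        = 3 ^ (n / 3) := by
  obtain ⟨m, rfl⟩ := hn
  let e : Fin (3 * m) ≃ Fin m × Fin 3 := (finCongr (mul_comm 3 m)).trans finProdFinEquiv.symm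
  let p : Fin (3 * m) → Fin m := fun a => (e a).1
  have hp : p.Surjective := fun i => ⟨e.symm (i, 0), by simp [p]⟩
  refine ⟨(⊤ : SimpleGraph (Fin m)).comap p, ?_⟩
  convert ncard_setOf_bijOn_univ p using 2
  · ext s
    rw [mem_ofPred_eq, mem_ofPred_eq, ← SimpleGraph.maximal_isClique_comap_top_iff hp,
      ← SimpleGraph.maximal_isClique_coe_finset_iff, maximal_iff]
  · simp only [p, e.natCard_fiber_fst, Nat.card_fin, Finset.prod_const, Finset.card_univ,
      Fintype.card_fin]
    rw [Nat.mul_div_cancel_left m three_pos]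
end

section
/- (Correctness of pivoting) Let G be a graph, K a clique, cand and fini disjoint vertex sets with every element of cand ∪ fini adjacent to all of K. Let u ∈ cand ∪ fini be any vertex. Then every maximal clique C of G with K ⊆ C ⊆ K ∪ cand contains at least one vertex of cand \ Γ(u). -/
namespace SimpleGraph

theorem mem_of_maximal_isClique_of_forall_adj {V : Type*} {G : SimpleGraph V} {C : Set V}
    (hC : Maximal G.IsClique C) {u : V} (hu : ∀ x ∈ C, u ≠ x → G.Adj u x) : u ∈ C :=
  hC.mem_of_prop_insert (isClique_insert.2 ⟨hC.prop, hu⟩)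

end SimpleGraph

theorem pivot_correctness_general {V : Type*} (G : SimpleGraph V) (K cand fini : Set V)
    (hadj : ∀ w ∈ cand ∪ fini, ∀ u ∈ K, G.Adj w u)
    (u : V) (hu : u ∈ cand ∪ fini)
    (C : Set V) (hC : G.IsClique C)
    (hCmax : ∀ D : Set V, G.IsClique D → C ⊆ D → C = D)
    (hCsub : C ⊆ K ∪ cand) :
    (C ∩ (cand \ G.neighborSet u)).Nonempty := by
  by_contra hempty
  have hCmaximal : Maximal G.IsClique C := ⟨hC, fun D hD hCD => (hCmax D hD hCD).ge⟩
  -- Otherwise `u` is adjacent to all of `C`, so maximality puts `u` itself in `C`.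
  have huC : u ∈ C := G.mem_of_maximal_isClique_of_forall_adj hCmaximal fun x hxC _ => by
    rcases hCsub hxC with hxK | hxcand
    · exact hadj u hu x hxK
    · by_contra hux
      exact hempty ⟨x, hxC, hxcand, hux⟩
  rcases hCsub huC with huK | hucand
  · exact G.irrefl (hadj u hu u huK)
  · exact hempty ⟨u, huC, hucand, G.irrefl⟩

/-- correctness of pivoting: every maximal clique `C` with
`K ⊆ C ⊆ K ∪ cand` contains a vertex of `cand \ Γ(u)` for any pivot
`u ∈ cand ∪ fini`. -/
theorem pivot_correctness {V : Type*} (G : SimpleGraph V) (K cand fini : Set V)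
    (hK : G.IsClique K) (hdisj : Disjoint cand fini)
    (hadj : ∀ w ∈ cand ∪ fini, ∀ u ∈ K, G.Adj w u)
    (u : V) (hu : u ∈ cand ∪ fini)
    (C : Set V) (hC : G.IsClique C)
    (hCmax : ∀ D : Set V, G.IsClique D → C ⊆ D → C = D)
    (hKC : K ⊆ C) (hCsub : C ⊆ K ∪ cand) :
    (C ∩ (cand \ G.neighborSet u)).Nonempty :=
  pivot_correctness_general G K cand fini hadj u hu C hC hCmax hCsub
end

section
/- Let G be a graph, K a clique, cand a set of common neighbors of K, and q ∈ cand. Then K ∪ {q} is a clique, and a set C with K ∪ {q} ⊆ C is a clique contained in K ∪ {q} ∪ cand if and only if C = K ∪ {q} ∪ D for some clique-extending set D ⊆ cand ∩ Γ(q) of common neighbors of K ∪ {q} that is itself a clique. -/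
/-- recursion-parameter update of the TTT algorithm. `K ∪ {q}` is a
clique, and a superset `C` of `K ∪ {q}` is a clique contained in `K ∪ {q} ∪ cand`
iff `C = K ∪ {q} ∪ D` for some clique `D ⊆ cand ∩ Γ(q)` of common neighbors of
`K ∪ {q}`. -/
theorem ttt_recursion_update {V : Type*} (G : SimpleGraph V) (K cand : Set V)
    (hK : G.IsClique K) (hcand : ∀ w ∈ cand, ∀ u ∈ K, G.Adj w u)
    (q : V) (hq : q ∈ cand) :
    G.IsClique (K ∪ {q}) ∧
    ∀ C : Set V, K ∪ {q} ⊆ C →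
      ((G.IsClique C ∧ C ⊆ K ∪ {q} ∪ cand) ↔
        ∃ D : Set V, D ⊆ cand ∩ G.neighborSet q ∧ G.IsClique D ∧
          (∀ d ∈ D, ∀ x ∈ K ∪ {q}, G.Adj d x) ∧ C = K ∪ {q} ∪ D) := by
  have hKq : G.IsClique (K ∪ {q}) := by
    intro a ha b hb hab
    rcases ha with ha | ha <;> rcases hb with hb | hb
    · exact hK ha hb hab
    · cases hb; exact (hcand q hq a ha).symm
    · cases ha; exact hcand q hq b hb
    · exact absurd (ha.trans hb.symm) hab
  refine ⟨hKq, fun C hKC => ⟨?_, ?_⟩⟩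
  · rintro ⟨hCcl, hCsub⟩
    refine ⟨C \ (K ∪ {q}), ?_, hCcl.subset (Set.diff_subset), ?_, ?_⟩
    · rintro d ⟨hdC, hd⟩
      have hdc : d ∈ cand := by
        rcases hCsub hdC with (h | h) | h
        · exact absurd (Or.inl h) hd
        · exact absurd (Or.inr h) hd
        · exact h
      refine ⟨hdc, ?_⟩
      have hdq : d ≠ q := fun h => hd (Or.inr h)
      exact (hCcl hdC (hKC (Or.inr rfl)) hdq).symm
    · rintro d ⟨hdC, hd⟩ x hx
      have : d ≠ x := fun h => hd (h ▸ hx)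
      exact hCcl hdC (hKC hx) this
    · apply Set.Subset.antisymm
      · intro c hc
        by_cases h : c ∈ K ∪ {q}
        · exact Or.inl h
        · exact Or.inr ⟨hc, h⟩
      · rintro c (h | h)
        · exact hKC h
        · exact h.1
  · rintro ⟨D, hDsub, hDcl, hDadj, rfl⟩
    constructor
    · intro a ha b hb hab
      rcases ha with ha | ha <;> rcases hb with hb | hb
      · exact hKq ha hb hab
      · exact (hDadj b hb a ha).symm
      · exact hDadj a ha b hb
      · exact hDcl ha hb hab
    · rintro c (h | h)
      · exact Or.inl h
      · exact Or.inr (hDsub h).1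
end

section
/- Let G be a graph, K a clique, and cand, fini disjoint sets of common neighbors of K such that every common neighbor of K lies in cand ∪ fini. Fix a pivot u ∈ cand ∪ fini and enumerate ext = cand \ Γ(u) as v_1,…,v_κ. Then the family of maximal cliques C of G satisfying K ⊆ C ⊆ K ∪ cand is partitioned by the index i of the first vertex v_i (in enumeration order) belonging to C, where each such C with first index i satisfies K ∪ {v_i} ⊆ C ⊆ K ∪ {v_i} ∪ ((cand \ {v_1,…,v_{i-1}}) ∩ Γ(v_i)) and C ∩ ({v_1,…,v_{i-1}} ∩ Γ(v_i)) = ∅. -/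
/-- the recursive subproblems of (Par)TTT are disjoint and jointly
exhaustive. For each maximal clique `C` with `K ⊆ C ⊆ K ∪ cand`, there is a unique
first index `i` with `v i ∈ C`, and for this `i` we have
`K ∪ {v i} ⊆ C ⊆ K ∪ {v i} ∪ ((cand \ {v_1,…,v_{i-1}}) ∩ Γ(v i))` and
`C ∩ ({v_1,…,v_{i-1}} ∩ Γ(v i)) = ∅`. -/
theorem parttt_subproblems_partition {V : Type*} (G : SimpleGraph V)
    (K cand fini : Set V) (hK : G.IsClique K) (hdisj : Disjoint cand fini)
    (hadj : ∀ w ∈ cand ∪ fini, ∀ x ∈ K, G.Adj w x)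
    (hcover : ∀ w : V, w ∉ K → (∀ x ∈ K, G.Adj w x) → w ∈ cand ∪ fini)
    (u : V) (hu : u ∈ cand ∪ fini)
    (κ : ℕ) (v : Fin κ → V) (hvinj : Function.Injective v)
    (hvrange : Set.range v = cand \ G.neighborSet u) :
    ∀ C : Set V, G.IsClique C → (∀ D : Set V, G.IsClique D → C ⊆ D → C = D) →
      K ⊆ C → C ⊆ K ∪ cand →
      ∃! i : Fin κ,
        (v i ∈ C ∧ ∀ j : Fin κ, j < i → v j ∉ C) ∧
        K ∪ {v i} ⊆ C ∧
        C ⊆ K ∪ {v i} ∪ ((cand \ (v '' {j | j < i})) ∩ G.neighborSet (v i)) ∧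
        C ∩ ((v '' {j | j < i}) ∩ G.neighborSet (v i)) = ∅ := by
  intro C hC hmax hKC hCcand
  classical
  have huK : u ∉ K := fun h => G.irrefl (hadj u hu u h)
  -- existence of some index with v i ∈ C
  have hex : ∃ i, v i ∈ C := by
    by_contra h
    push_neg at h
    have huC : u ∉ C := by
      intro huC
      rcases hCcand huC with h1 | h2
      · exact huK h1
      · have hur : u ∈ Set.range v := by
          rw [hvrange]; exact ⟨h2, fun had => G.irrefl had⟩
        obtain ⟨i, hi⟩ := hur
        exact h i (hi ▸ huC)
    have hadj' : ∀ b ∈ C, u ≠ b → G.Adj u b := by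
      intro b hb _
      rcases hCcand hb with h1 | h2
      · exact hadj u hu b h1
      · by_cases hbu : b ∈ G.neighborSet u
        · exact hbu
        · have hbr : b ∈ Set.range v := by rw [hvrange]; exact ⟨h2, hbu⟩
          obtain ⟨j, hj⟩ := hbr
          exact absurd (hj ▸ hb) (h j)
    have hclq : G.IsClique (insert u C) := hC.insert hadj'
    have := hmax _ hclq (Set.subset_insert u C)
    exact huC (this ▸ Set.mem_insert u C)
  -- take the least such index
  let s : Finset (Fin κ) := Finset.univ.filter (fun i => v i ∈ C)
  have hsne : s.Nonempty := by
    obtain ⟨i, hi⟩ := hex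
    exact ⟨i, by simp [s, hi]⟩
  set i := s.min' hsne with hidef
  have hiC : v i ∈ C := by
    have := s.min'_mem hsne
    simpa [s] using this
  have hmin : ∀ j : Fin κ, j < i → v j ∉ C := by
    intro j hj hjC
    have : i ≤ j := s.min'_le j (by simp [s, hjC])
    exact absurd hj (not_lt.mpr this)
  refine ⟨i, ⟨⟨hiC, hmin⟩, ?_, ?_, ?_⟩, ?_⟩
  · -- K ∪ {v i} ⊆ C
    intro x hx
    rcases hx with hx | hx
    · exact hKC hx
    · exact hx ▸ hiC
  · -- C ⊆ ...
    intro c hc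
    by_cases hcK : c ∈ K
    · exact Or.inl (Or.inl hcK)
    by_cases hcv : c = v i
    · exact Or.inl (Or.inr hcv)
    have hcand : c ∈ cand := (hCcand hc).resolve_left hcK
    refine Or.inr ⟨⟨hcand, ?_⟩, ?_⟩
    · rintro ⟨j, hj, rfl⟩
      exact hmin j hj hc
    · exact hC hiC hc (fun h => hcv h.symm)
  · -- disjointness
    apply Set.eq_empty_iff_forall_notMem.mpr
    rintro x ⟨hxC, hx2, -⟩
    obtain ⟨j, hj, hje⟩ := hx2
    exact hmin j hj (hje ▸ hxC)
  · -- uniqueness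
    rintro i' ⟨⟨hi'C, hmin'⟩, -⟩
    rcases lt_trichotomy i' i with h | h | h
    · exact absurd hi'C (hmin i' h)
    · exact h
    · exact absurd hiC (hmin' i h)
end
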